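/- Let a, b, ξ > 0 satisfy √a + √b = (2ξ)^{1/4} and a + b < √(2ξ), and let δ₂ > 0 be sufficiently small. Suppose g : [0,1] → ℝ is absolutely continuous with g(0) = a, g(1) = b, |{t : g(t) = 0}| = 0, and ‖g − h̄‖_∞ ≥ δ₂, where h̄(t) = (1−t)a + tb. Then Σ⁽¹⁾(g) − min Σ⁽¹⁾ ≥ 2δ₂², where Σ⁽¹⁾(g) = (1/2)∫₀¹ g'² dt − ξ|{g = 0}| and min Σ⁽¹⁾ = (1/2)(a−b)². -/

import Mathlib

/-!
Only the Dirichlet energy matters, since the zero set of `g` is null. Let `d` be the deviation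
of `g` from the chord at a time `t`. Cauchy–Schwarz on `[0, t]` and on `[t, 1]` bounds the
energy below by the energy of the broken line through `(t, h̄(t) + d)`, namely
`(a - b)² + d² (1/t + 1/(1 - t)) ≥ (a - b)² + 4 d²`.
-/

open MeasureTheory Set

/-- One-dimensional pinning energy functional:
`Σ⁽¹⁾(g) = (1/2)∫₀¹ g'(t)² dt − ξ·|{t ∈ [0,1] : g(t) = 0}|`. -/
noncomputable def pinE (ξ : ℝ) (g : ℝ → ℝ) : ℝ :=
  (1/2) * ∫ t in (0:ℝ)..1, (deriv g t)^2
    - ξ * (volume {t ∈ Icc (0:ℝ) 1 | g t = 0}).toReal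

lemma IntervalIntegrable.of_sq {f : ℝ → ℝ} (hm : AEStronglyMeasurable f volume) {u v : ℝ}
    (h2 : IntervalIntegrable (fun s => f s ^ 2) volume u v) :
    IntervalIntegrable f volume u v := by
  have h1 : IntervalIntegrable (fun _ => (1:ℝ)) volume u v := intervalIntegrable_const
  refine (h2.add h1).mono_fun hm.restrict (Filter.Eventually.of_forall fun s => ?_)
  have hpos : (0:ℝ) ≤ f s ^ 2 + 1 := by positivity
  show ‖f s‖ ≤ ‖f s ^ 2 + 1‖
  rw [Real.norm_eq_abs, Real.norm_eq_abs, abs_of_nonneg hpos]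
  nlinarith [sq_nonneg (|f s| - 1), sq_abs (f s)]

lemma sq_intervalIntegral_le {f : ℝ → ℝ} (hm : AEStronglyMeasurable f volume) {u v : ℝ}
    (huv : u ≤ v) (h2 : IntervalIntegrable (fun s => f s ^ 2) volume u v) :
    (∫ s in u..v, f s) ^ 2 ≤ (v - u) * ∫ s in u..v, f s ^ 2 := by
  rcases huv.eq_or_lt with rfl | hlt
  · simp
  have hf : IntervalIntegrable f volume u v := .of_sq hm h2
  set L := v - u
  set I := ∫ s in u..v, f s
  set S := ∫ s in u..v, f s ^ 2
  have hL : 0 < L := sub_pos.mpr hlt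
  have hlin : IntervalIntegrable (fun s => (L ^ 2) * f s ^ 2 - (2 * L * I) * f s) volume u v :=
    (h2.const_mul _).sub (hf.const_mul _)
  -- the variance identity, scaled by `L` to avoid dividing by it
  have hvar : ∫ s in u..v, (L * f s - I) ^ 2 = L * (L * S - I ^ 2) := by
    have hexp : (fun s => (L * f s - I) ^ 2)
        = fun s => ((L ^ 2) * f s ^ 2 - (2 * L * I) * f s) + I ^ 2 := by
      funext s; ring
    rw [hexp, intervalIntegral.integral_add hlin intervalIntegrable_const,
      intervalIntegral.integral_sub (h2.const_mul _) (hf.const_mul _),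
      intervalIntegral.integral_const_mul, intervalIntegral.integral_const_mul,
      intervalIntegral.integral_const, smul_eq_mul]
    ring
  have hnonneg : 0 ≤ L * (L * S - I ^ 2) :=
    hvar ▸ intervalIntegral.integral_nonneg huv fun s _ => sq_nonneg _
  exact sub_nonneg.mp ((mul_nonneg_iff_of_pos_left hL).mp hnonneg)

lemma sq_add_four_mul_sq_le_of_split {t X Y c d : ℝ} (ht : t ∈ Icc (0:ℝ) 1)
    (hX : 0 ≤ X) (hY : 0 ≤ Y)
    (h₁ : (t * c + d) ^ 2 ≤ t * X) (h₂ : ((1 - t) * c - d) ^ 2 ≤ (1 - t) * Y) :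
    c ^ 2 + 4 * d ^ 2 ≤ X + Y := by
  obtain ⟨ht0, ht1⟩ := ht
  have hsum : t * (1 - t) * c ^ 2 + d ^ 2 ≤ t * (1 - t) * (X + Y) := by
    nlinarith [mul_le_mul_of_nonneg_left h₁ (sub_nonneg.mpr ht1),
      mul_le_mul_of_nonneg_left h₂ ht0]
  rcases ht0.eq_or_lt with rfl | ht0'
  · nlinarith [sq_nonneg d]
  rcases ht1.eq_or_lt with rfl | ht1'
  · nlinarith [sq_nonneg d]
  -- `t (1 - t) ≤ 1/4`, i.e. `1/t + 1/(1 - t) ≥ 4`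
  nlinarith [mul_pos ht0' (sub_pos.mpr ht1'), mul_nonneg (sq_nonneg (2 * t - 1)) (sq_nonneg d)]

lemma sq_integral_add_four_mul_sq_deviation_le {f : ℝ → ℝ} (hm : AEStronglyMeasurable f volume)
    (h2 : IntervalIntegrable (fun s => f s ^ 2) volume 0 1) {t : ℝ} (ht : t ∈ Icc (0:ℝ) 1) :
    (∫ s in (0:ℝ)..1, f s) ^ 2 + 4 * ((∫ s in (0:ℝ)..t, f s) - t * ∫ s in (0:ℝ)..1, f s) ^ 2
      ≤ ∫ s in (0:ℝ)..1, f s ^ 2 := by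
  have hsub₁ : uIcc 0 t ⊆ uIcc (0:ℝ) 1 := uIcc_subset_uIcc left_mem_uIcc (Icc_subset_uIcc ht)
  have hsub₂ : uIcc t 1 ⊆ uIcc (0:ℝ) 1 := uIcc_subset_uIcc (Icc_subset_uIcc ht) right_mem_uIcc
  have hf := IntervalIntegrable.of_sq hm h2
  rw [← intervalIntegral.integral_add_adjacent_intervals (hf.mono_set hsub₁) (hf.mono_set hsub₂),
    ← intervalIntegral.integral_add_adjacent_intervals (h2.mono_set hsub₁) (h2.mono_set hsub₂)]
  have hcs₁ := sq_intervalIntegral_le hm ht.1 (h2.mono_set hsub₁)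
  have hcs₂ := sq_intervalIntegral_le hm ht.2 (h2.mono_set hsub₂)
  refine sq_add_four_mul_sq_le_of_split ht
    (intervalIntegral.integral_nonneg ht.1 fun s _ => sq_nonneg _)
    (intervalIntegral.integral_nonneg ht.2 fun s _ => sq_nonneg _) ?_ ?_
  · convert hcs₁ using 2 <;> ring
  · convert hcs₂ using 2; ring

theorem stmt5_general (a b ξ : ℝ) :
    ∃ δ₀ > (0:ℝ), ∀ δ₂ : ℝ, 0 < δ₂ → δ₂ ≤ δ₀ →
      ∀ g : ℝ → ℝ,
        (∀ x ∈ Icc (0:ℝ) 1, g x = a + ∫ s in (0:ℝ)..x, deriv g s) →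
        IntervalIntegrable (fun s => (deriv g s)^2) volume 0 1 →
        g 1 = b →
        volume {t ∈ Icc (0:ℝ) 1 | g t = 0} = 0 →
        (∃ t ∈ Icc (0:ℝ) 1, δ₂ ≤ |g t - ((1-t)*a + t*b)|) →
        2 * δ₂^2 ≤ pinE ξ g - (1/2) * (a-b)^2 := by
  refine ⟨1, one_pos, fun δ₂ hδ₂ _ g hg hsq hg1 hnull ⟨t, ht, hdev⟩ => ?_⟩
  have hbound := sq_integral_add_four_mul_sq_deviation_le
    (measurable_deriv g).aestronglyMeasurable hsq ht
  have hend : ∫ s in (0:ℝ)..1, deriv g s = b - a := by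
    linarith [hg 1 (right_mem_Icc.mpr zero_le_one)]
  have hmid : ∫ s in (0:ℝ)..t, deriv g s = g t - a := by linarith [hg t ht]
  have hchord : g t - a - t * (b - a) = g t - ((1 - t) * a + t * b) := by ring
  rw [hend, hmid, hchord] at hbound
  have hpin : pinE ξ g = (1/2) * ∫ s in (0:ℝ)..1, deriv g s ^ 2 := by
    rw [pinE, hnull]; simp
  have hdev_sq : δ₂ ^ 2 ≤ (g t - ((1 - t) * a + t * b)) ^ 2 := by
    rw [← sq_abs (g t - _)]; exact pow_le_pow_left₀ hδ₂.le hdev 2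
  rw [hpin, sub_sq_comm a]
  linarith

/-- Stability for profiles not touching zero: if `g` is absolutely continuous on `[0,1]`
(with square-integrable derivative), `g(0) = a`, `g(1) = b`, `|{g = 0}| = 0`, and `g`
deviates from the straight line `h̄` by at least `δ₂` in sup-norm, then
`Σ⁽¹⁾(g) − min Σ⁽¹⁾ ≥ 2δ₂²`, for all sufficiently small `δ₂ > 0`. -/
theorem stmt5 (a b ξ : ℝ) (ha : 0 < a) (hb : 0 < b) (hξ : 0 < ξ)
    (hcrit : Real.sqrt a + Real.sqrt b = (2*ξ) ^ ((1:ℝ)/4))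
    (hab : a + b < Real.sqrt (2*ξ)) :
    ∃ δ₀ > (0:ℝ), ∀ δ₂ : ℝ, 0 < δ₂ → δ₂ ≤ δ₀ →
      ∀ g : ℝ → ℝ,
        (∀ x ∈ Icc (0:ℝ) 1, g x = a + ∫ s in (0:ℝ)..x, deriv g s) →
        IntervalIntegrable (fun s => (deriv g s)^2) volume 0 1 →
        g 1 = b →
        volume {t ∈ Icc (0:ℝ) 1 | g t = 0} = 0 →
        (∃ t ∈ Icc (0:ℝ) 1, δ₂ ≤ |g t - ((1-t)*a + t*b)|) →
        2 * δ₂^2 ≤ pinE ξ g - (1/2) * (a-b)^2 :=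
  stmt5_general a b ξ
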